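/- The relative capacity is continuous under increasing unions of Borel sets: if G₁ ⊆ G₂ ⊆ … are Borel subsets of D, then cap_{V,m}(⋃_{j=1}^∞ G_j, D) = lim_{j→∞} cap_{V,m}(G_j, D). -/
import Mathlib


open MeasureTheory Filter Topology

/-- Capacity of a compact set: the supremum of the measures `μ_φ(K)` over the family. -/
noncomputable def capK {n : ℕ} {F : Type*} (μ : F → Measure (Fin n → ℝ))
    (K : Set (Fin n → ℝ)) : ENNReal :=
  ⨆ φ : F, μ φ K

/-- Relative capacity of an arbitrary set: inner supremum over compact subsets. -/
noncomputable def cap {n : ℕ} {F : Type*} (μ : F → Measure (Fin n → ℝ))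
    (E : Set (Fin n → ℝ)) : ENNReal :=
  ⨆ (K : Set (Fin n → ℝ)) (_ : IsCompact K ∧ K ⊆ E), capK μ K

/-- Continuity of the relative capacity along increasing sequences of Borel sets. -/
theorem stmt10 {n : ℕ} {F : Type*} (D : Set (Fin n → ℝ)) (hD : IsOpen D)
    (μ : F → Measure (Fin n → ℝ)) (hμ : ∀ φ, (μ φ).InnerRegular)
    (G : ℕ → Set (Fin n → ℝ)) (hGmono : Monotone G)
    (hGmeas : ∀ j, MeasurableSet (G j)) (hGD : ∀ j, G j ⊆ D) :
    Tendsto (fun j => cap μ (G j)) atTop (𝓝 (cap μ (⋃ j, G j))) := by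
  have capmono : ∀ {A B : Set (Fin n → ℝ)}, A ⊆ B → cap μ A ≤ cap μ B := by
    intro A B hAB
    refine iSup_le fun K => iSup_le fun hK => ?_
    exact le_iSup₂_of_le K ⟨hK.1, hK.2.trans hAB⟩ le_rfl
  have hmono : Monotone fun j => cap μ (G j) := fun i j h => capmono (hGmono h)
  have key : cap μ (⋃ j, G j) = ⨆ j, cap μ (G j) := by
    refine le_antisymm ?_ (iSup_le fun j => capmono (Set.subset_iUnion G j))
    refine iSup_le fun K => iSup_le fun hK => iSup_le fun φ => ?_
    have hKm : MeasurableSet K := hK.1.isClosed.measurableSet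
    have hKU : K = ⋃ j, K ∩ G j := by
      rw [← Set.inter_iUnion]; exact (Set.inter_eq_left.mpr hK.2).symm
    have h1 : μ φ K = ⨆ j, μ φ (K ∩ G j) := by
      conv_lhs => rw [hKU]
      exact Directed.measure_iUnion
        (Monotone.directed_le fun i j h => Set.inter_subset_inter_right K (hGmono h))
    rw [h1]
    refine iSup_le fun j => ?_
    have h2 := (hμ φ).innerRegular.measure_eq_iSup (hKm.inter (hGmeas j))
    rw [h2]
    refine iSup_le fun K' => iSup_le fun hsub => iSup_le fun hK' => ?_
    calc μ φ K' ≤ capK μ K' := le_iSup (fun ψ => μ ψ K') φ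
    _ ≤ cap μ (G j) := le_iSup₂_of_le K' ⟨hK', hsub.trans (Set.inter_subset_right)⟩ le_rfl
    _ ≤ ⨆ j, cap μ (G j) := le_iSup (fun j => cap μ (G j)) j
  rw [key]
  exact tendsto_atTop_iSup hmono
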